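/- arXiv:1503.04688 — 4 statements merged into one kernel-verified Lean document; each statement's English description precedes it below -/
import Mathlib

section
/- Let G be a strongly connected digraph on n ≥ 2 vertices containing a loop (an arc from some vertex to itself). Then there is a boolean function f : {0,1}ⁿ → {0,1}ⁿ whose interaction digraph (forgetting signs) is G and such that f^{2n−1} is constant. -/
/-- `f i` depends essentially on coordinate `j` (boolean states). -/
def dependsB {n : ℕ} (f : (Fin n → Bool) → (Fin n → Bool)) (j i : Fin n) : Prop :=
  ∃ x y : Fin n → Bool, (∀ k, k ≠ j → x k = y k) ∧ f x i ≠ f y i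

open Classical Relation

namespace S12
attribute [local instance] Classical.propDecidable

variable {n : ℕ}

/-- The and-net with one negated input: arc `(a,b)` negated. -/
noncomputable def gate (adj : Fin n → Fin n → Prop) (a b : Fin n)
    (x : Fin n → Bool) (i : Fin n) : Bool :=
  if (∀ j, adj j i → (if j = a ∧ i = b then !(x j) else x j) = true) then true else false

variable {adj : Fin n → Fin n → Prop} {a b : Fin n}

lemma gate_eq_true {x : Fin n → Bool} {i : Fin n} :
    gate adj a b x i = true ↔
      (∀ j, adj j i → (if j = a ∧ i = b then !(x j) else x j) = true) := by
  unfold gate; split <;> simp_all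

lemma gate_eq_false {x : Fin n → Bool} {i : Fin n} :
    gate adj a b x i = false ↔
      ¬(∀ j, adj j i → (if j = a ∧ i = b then !(x j) else x j) = true) := by
  rw [← Bool.not_eq_true, gate_eq_true]

lemma gate_true_elim {x : Fin n → Bool} {i j : Fin n} (h : gate adj a b x i = true)
    (hj : adj j i) : (if j = a ∧ i = b then !(x j) else x j) = true :=
  gate_eq_true.1 h j hj

lemma gate_fprop {x : Fin n → Bool} {i j : Fin n} (hj : adj j i)
    (hne : ¬(j = a ∧ i = b)) (hx : x j = false) : gate adj a b x i = false := by
  rw [gate_eq_false]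
  intro h
  have := h j hj
  rw [if_neg hne, hx] at this
  exact Bool.false_ne_true this

lemma gate_congr {x y : Fin n → Bool} {i : Fin n}
    (h : ∀ j, adj j i → x j = y j) : gate adj a b x i = gate adj a b y i := by
  unfold gate
  refine if_congr ?_ rfl rfl
  constructor <;> intro hh j hj
  · rw [← h j hj]; exact hh j hj
  · rw [h j hj]; exact hh j hj

/-- essential dependence of the and-net. -/
lemma gate_depends :
    ∀ j i, dependsB (gate adj a b) j i ↔ adj j i := by
  intro j i
  constructor
  · rintro ⟨x, y, hagree, hne⟩
    by_contra hadj
    exact hne (gate_congr (fun k hk => hagree k (fun hkj => hadj (hkj ▸ hk))))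
  · intro hji
    refine ⟨(fun k => if k = a ∧ i = b then false else true),
      Function.update (fun k => if k = a ∧ i = b then false else true) j
        (!(if j = a ∧ i = b then false else true)), fun k hk => ?_, ?_⟩
    · rw [Function.update_of_ne hk]
    · set x : Fin n → Bool := fun k => if k = a ∧ i = b then false else true with hx
      set y := Function.update x j (!(x j)) with hy
      have hxt : gate adj a b x i = true := by
        rw [gate_eq_true]
        intro k hk
        by_cases hc : k = a ∧ i = b
        · rw [if_pos hc, hx]; simp [hc]
        · rw [if_neg hc, hx]; simp [hc]
      have hyf : gate adj a b y i = false := by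
        apply gate_eq_false.2
        intro h
        have := h j hji
        have hyj : y j = !(x j) := by rw [hy, Function.update_self]
        by_cases hc : j = a ∧ i = b
        · rw [if_pos hc, hyj, hx] at this
          simp [hc] at this
        · rw [if_neg hc, hyj, hx] at this
          simp [hc] at this
      rw [hxt, hyf]; simp


/-- Certificate for fast convergence of the and-net with negated arc `(a,b)`. -/
structure Cert (n : ℕ) (adj : Fin n → Fin n → Prop) where
  u : Fin n
  a : Fin n
  b : Fin n
  loop : adj u u
  arc : adj a b
  nuu : ¬(a = u ∧ b = u)
  val : Fin n → Bool
  time : Fin n → ℕ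
  valu : val u = false
  p : ℕ
  q : ℕ
  wa : ℕ → Fin n
  wb : ℕ → Fin n
  wa0 : wa 0 = a
  waq : wa q = u
  wastep : ∀ s, s < q → adj (wa s) (wa (s+1)) ∧ ¬(wa s = a ∧ wa (s+1) = b)
  wb0 : wb 0 = b
  wbp : wb p = u
  wbstep : ∀ s, s < p → adj (wb s) (wb (s+1)) ∧ ¬(wb s = a ∧ wb (s+1) = b)
  timeu_p : p + 1 ≤ time u
  timeu_q : q ≤ time u
  rules : ∀ i, i ≠ u →
    ((val i = false ∧ ∃ j, adj j i ∧ ¬(j = a ∧ i = b) ∧ val j = false ∧ time j < time i)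
     ∨ ((∀ j, adj j i → time j < time i) ∧
        (val i = true ↔ ∀ j, adj j i → (if j = a ∧ i = b then !(val j) else val j) = true)))
  deadline : ∀ i, time i ≤ 2*n - 1
  timepos : ∀ i, 1 ≤ time i

namespace Cert

variable (C : Cert n adj)

/-- false is absorbing at `u`. -/
lemma absorb {x : Fin n → Bool} (hx : x C.u = false) :
    gate adj C.a C.b x C.u = false :=
  gate_fprop C.loop (fun h => C.nuu ⟨h.1.symm ▸ rfl, h.2.symm ▸ rfl⟩) hx

lemma exists_false (x : Fin n → Bool) :
    ∃ t ≤ C.time C.u, (gate adj C.a C.b)^[t] x C.u = false := by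
  by_contra hcon
  push_neg at hcon
  have htrue : ∀ t, t ≤ C.time C.u → (gate adj C.a C.b)^[t] x C.u = true := by
    intro t ht
    have := hcon t ht
    simpa [Bool.not_eq_false] using this
  -- backward truth propagation along a walk avoiding the negated arc
  have back : ∀ (w : ℕ → Fin n) (m : ℕ), w m = C.u →
      (∀ s, s < m → adj (w s) (w (s+1)) ∧ ¬(w s = C.a ∧ w (s+1) = C.b)) →
      ∀ d, d ≤ m → ∀ t, t + d ≤ C.time C.u → (gate adj C.a C.b)^[t] x (w (m - d)) = true := by
    intro w m hwm hws d
    induction d with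
    | zero =>
      intro _ t ht
      simpa [hwm] using htrue t (by omega)
    | succ d ih =>
      intro hd t ht
      have h1 : (gate adj C.a C.b)^[t+1] x (w (m - d)) = true := ih (by omega) (t+1) (by omega)
      rw [Function.iterate_succ_apply'] at h1
      have hs : m - (d+1) < m := by omega
      have hstep := hws (m - (d+1)) (by omega)
      have hsucc : m - (d+1) + 1 = m - d := by omega
      rw [hsucc] at hstep
      have := gate_true_elim h1 hstep.1
      rw [if_neg hstep.2] at this
      exact this
  have hb1 : (gate adj C.a C.b)^[1] x C.b = true := by
    have := back C.wb C.p C.wbp C.wbstep C.p le_rfl 1 (by have := C.timeu_p; omega)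
    simpa [C.wb0] using this
  have ha0f : x C.a = false := by
    rw [Function.iterate_one] at hb1
    have := gate_true_elim hb1 C.arc
    rw [if_pos ⟨rfl, rfl⟩] at this
    simpa using this
  have ha0t : x C.a = true := by
    have := back C.wa C.q C.waq C.wastep C.q le_rfl 0 (by have := C.timeu_q; omega)
    simpa [C.wa0] using this
  rw [ha0f] at ha0t
  exact Bool.false_ne_true ha0t

lemma u_settles (x : Fin n → Bool) {t : ℕ} (ht : C.time C.u ≤ t) :
    (gate adj C.a C.b)^[t] x C.u = false := by
  obtain ⟨t0, ht0, hf⟩ := C.exists_false x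
  have key : ∀ s, (gate adj C.a C.b)^[t0 + s] x C.u = false := by
    intro s
    induction s with
    | zero => simpa using hf
    | succ s ih =>
      rw [← Nat.add_assoc, Function.iterate_succ_apply']
      exact C.absorb ih
  have : t = t0 + (t - t0) := by omega
  rw [this]
  exact key _

lemma settles (x : Fin n → Bool) :
    ∀ t, ∀ i, C.time i ≤ t → (gate adj C.a C.b)^[t] x i = C.val i := by
  intro t
  induction t with
  | zero =>
    intro i hi
    exact absurd hi (by have := C.timepos i; omega)
  | succ t ih =>
    intro i hi
    by_cases hu : i = C.u
    · subst hu
      rw [C.valu]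
      exact C.u_settles x hi
    · rcases C.rules i hu with ⟨hv, j, hadj, hne, hvj, hlt⟩ | ⟨hall, hval⟩
      · rw [Function.iterate_succ_apply', hv]
        exact gate_fprop hadj hne (by rw [ih j (by omega)]; exact hvj)
      · rw [Function.iterate_succ_apply']
        have hx : ∀ j, adj j i → (gate adj C.a C.b)^[t] x j = C.val j := by
          intro j hj
          exact ih j (by have := hall j hj; omega)
        have : gate adj C.a C.b ((gate adj C.a C.b)^[t] x) i = true ↔ C.val i = true := by
          rw [gate_eq_true, hval]
          constructor <;> intro h j hj <;> have h' := h j hj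
          · rwa [hx j hj] at h'
          · rwa [hx j hj]
        rcases Bool.eq_false_or_eq_true (C.val i) with h | h <;> rw [h] at this ⊢
        · exact this.mpr rfl
        · rw [← Bool.not_eq_true, this]
          simp


theorem dynamics : (gate adj C.a C.b)^[2*n-1] = Function.const _ C.val := by
  funext x i
  exact C.settles x _ i (C.deadline i)

end Cert

/-- iterated reachability sets of a relation `r` from `x`. -/
noncomputable def ast (r : Fin n → Fin n → Prop) (x : Fin n) : ℕ → Finset (Fin n)
  | 0 => {x}
  | t+1 => ast r x t ∪ Finset.univ.filter (fun z => ∃ w ∈ ast r x t, r w z)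

variable {r : Fin n → Fin n → Prop} {x : Fin n}

lemma ast_zero : ast r x 0 = {x} := rfl

lemma ast_succ (t : ℕ) :
    ast r x (t+1) = ast r x t ∪ Finset.univ.filter (fun z => ∃ w ∈ ast r x t, r w z) := rfl

lemma ast_mono_succ (t : ℕ) : ast r x t ⊆ ast r x (t+1) := by
  rw [ast_succ]; exact Finset.subset_union_left

lemma ast_mono {s t : ℕ} (h : s ≤ t) : ast r x s ⊆ ast r x t := by
  induction t with
  | zero => simp_all
  | succ t ih =>
    rcases Nat.lt_or_ge s (t+1) with h' | h'
    · exact (ih (by omega)).trans (ast_mono_succ t)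
    · have : s = t + 1 := by omega
      subst this; rfl

lemma self_mem_ast (t : ℕ) : x ∈ ast r x t :=
  ast_mono (Nat.zero_le t) (by simp [ast_zero])

lemma ast_rtg {v : Fin n} {t : ℕ} (h : v ∈ ast r x t) : ReflTransGen r x v := by
  induction t generalizing v with
  | zero => rw [ast_zero, Finset.mem_singleton] at h; subst h; exact .refl
  | succ t ih =>
    rw [ast_succ, Finset.mem_union] at h
    rcases h with h | h
    · exact ih h
    · rw [Finset.mem_filter] at h
      obtain ⟨w, hw, hr⟩ := h.2
      exact .tail (ih hw) hr

lemma rtg_ast {v : Fin n} (h : ReflTransGen r x v) : ∃ t, v ∈ ast r x t := by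
  induction h with
  | refl => exact ⟨0, by simp [ast_zero]⟩
  | tail h1 h2 ih =>
    obtain ⟨t, ht⟩ := ih
    exact ⟨t+1, by rw [ast_succ, Finset.mem_union, Finset.mem_filter]
                   exact Or.inr ⟨Finset.mem_univ _, _, ht, h2⟩⟩

lemma ast_stab {t : ℕ} (h : ast r x (t+1) = ast r x t) :
    ∀ s, t ≤ s → ast r x s = ast r x t := by
  intro s hs
  induction s with
  | zero => have : t = 0 := by omega
            subst this; rfl
  | succ s ih =>
    rcases Nat.lt_or_ge t (s+1) with h' | h'
    · have hst := ih (by omega)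
      rw [ast_succ, hst, ← ast_succ, h]
    · have : t = s + 1 := by omega
      subst this; rfl

lemma ast_growth {v : Fin n} {T : ℕ} (hT : v ∈ ast r x T) (hmin : ∀ s, v ∈ ast r x s → T ≤ s) :
    ∀ t, t ≤ T → t + 1 ≤ (ast r x t).card := by
  intro t ht
  induction t with
  | zero => simp [ast_zero]
  | succ t ih =>
    have h1 : t + 1 ≤ (ast r x t).card := ih (by omega)
    have hne : ast r x (t+1) ≠ ast r x t := by
      intro heq
      have hstab := ast_stab heq T (by omega)
      rw [hstab] at hT
      have := hmin t hT
      omega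
    have hss : ast r x t ⊂ ast r x (t+1) :=
      Finset.ssubset_iff_subset_ne.2 ⟨ast_mono_succ t, fun h => hne h.symm⟩
    have := Finset.card_lt_card hss
    omega

lemma rtg_mem_ast_bound {v : Fin n} (h : ReflTransGen r x v) : v ∈ ast r x (n-1) := by
  obtain ⟨T, hT⟩ := rtg_ast h
  -- take minimal T
  have hex : ∃ T, v ∈ ast r x T := ⟨T, hT⟩
  set T0 := Nat.find hex with hT0
  have hT0mem : v ∈ ast r x T0 := Nat.find_spec hex
  have hT0min : ∀ s, v ∈ ast r x s → T0 ≤ s := fun s hs => Nat.find_le hs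
  have hgrow := ast_growth hT0mem hT0min T0 le_rfl
  have hcard : (ast r x T0).card ≤ n := by
    have := Finset.card_le_card (Finset.subset_univ (ast r x T0))
    simpa using this
  have hT0le : T0 ≤ n - 1 := by omega
  exact ast_mono hT0le hT0mem

lemma mem_ast_walk {v : Fin n} {t : ℕ} (h : v ∈ ast r x t) :
    ∃ ℓ ≤ t, ∃ w : ℕ → Fin n, w 0 = x ∧ w ℓ = v ∧ ∀ s, s < ℓ → r (w s) (w (s+1)) := by
  induction t generalizing v with
  | zero =>
    rw [ast_zero, Finset.mem_singleton] at h
    exact ⟨0, le_rfl, fun _ => x, rfl, h ▸ rfl, by omega⟩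
  | succ t ih =>
    rw [ast_succ, Finset.mem_union] at h
    rcases h with h | h
    · obtain ⟨ℓ, hℓ, w, h0, hv, hs⟩ := ih h
      exact ⟨ℓ, by omega, w, h0, hv, hs⟩
    · rw [Finset.mem_filter] at h
      obtain ⟨-, pred, hpred, hr⟩ := h
      obtain ⟨ℓ, hℓ, w, h0, hp, hs⟩ := ih hpred
      refine ⟨ℓ+1, by omega, fun s => if s ≤ ℓ then w s else v, by simp [h0], by simp, ?_⟩
      intro s hs'
      by_cases hsl : s + 1 ≤ ℓ
      · show r (if s ≤ ℓ then w s else v) (if s + 1 ≤ ℓ then w (s+1) else v)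
        rw [if_pos (by omega : s ≤ ℓ), if_pos hsl]
        exact hs s (by omega)
      · have hseq : s = ℓ := by omega
        subst hseq
        show r (if s ≤ s then w s else v) (if s + 1 ≤ s then w (s+1) else v)
        rw [if_pos le_rfl, if_neg hsl, hp]
        exact hr

lemma walk_mem_ast (w : ℕ → Fin n) (hw0 : w 0 = x) {ℓ : ℕ}
    (hs : ∀ s, s < ℓ → r (w s) (w (s+1))) : ∀ j, j ≤ ℓ → w j ∈ ast r x j := by
  intro j hj
  induction j with
  | zero => simp [hw0, ast_zero]
  | succ j ih =>
    rw [ast_succ, Finset.mem_union, Finset.mem_filter]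
    exact Or.inr ⟨Finset.mem_univ _, w j, ih (by omega), hs j (by omega)⟩

lemma walk_rtg (w : ℕ → Fin n) {ℓ : ℕ} (hs : ∀ s, s < ℓ → r (w s) (w (s+1))) :
    ReflTransGen r (w 0) (w ℓ) := by
  induction ℓ with
  | zero => exact .refl
  | succ ℓ ih =>
    exact .tail (ih (fun s h => hs s (by omega))) (hs ℓ (by omega))

lemma rtg_flip {y : Fin n} (h : ReflTransGen r x y) :
    ReflTransGen (fun p q => r q p) y x := by
  induction h with
  | refl => exact .refl
  | tail h1 h2 ih => exact .head h2 ih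

/-- closed-set induction. -/
lemma closed_rtg {adj : Fin n → Fin n → Prop} {S : Finset (Fin n)}
    (hcl : ∀ p ∈ S, ∀ z, adj p z → z ∈ S) {v w : Fin n} (hv : v ∈ S)
    (h : ReflTransGen adj v w) : w ∈ S := by
  induction h with
  | refl => exact hv
  | tail h1 h2 ih => exact hcl _ ih _ h2


noncomputable def valN (adj : Fin n → Fin n → Prop) (a b : Fin n) (R : Finset (Fin n)) :
    ℕ → Fin n → Bool
  | 0 => fun _ => false
  | m+1 => fun i => if i ∈ R then false
      else if (∀ j, adj j i →
          (if j = a ∧ i = b then !(valN adj a b R m j) else valN adj a b R m j) = true)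
        then true else false

variable {adj : Fin n → Fin n → Prop} {a b : Fin n} {R : Finset (Fin n)}

lemma valN_succ (m : ℕ) (i : Fin n) :
    valN adj a b R (m+1) i = if i ∈ R then false
      else if (∀ j, adj j i →
          (if j = a ∧ i = b then !(valN adj a b R m j) else valN adj a b R m j) = true)
        then true else false := rfl

lemma valN_stab (ρ : Fin n → ℕ) (hρ : ∀ i, i ∉ R → ∀ j, adj j i → ρ j < ρ i) :
    ∀ k i m m', ρ i ≤ k → ρ i ≤ m → ρ i ≤ m' →
      valN adj a b R (m+1) i = valN adj a b R (m'+1) i := by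
  intro k
  induction k using Nat.strong_induction_on with
  | _ k ih =>
    intro i m m' hk hm hm'
    by_cases hiR : i ∈ R
    · rw [valN_succ, valN_succ, if_pos hiR, if_pos hiR]
    · rw [valN_succ, valN_succ, if_neg hiR, if_neg hiR]
      have hcong : ∀ j, adj j i → valN adj a b R m j = valN adj a b R m' j := by
        intro j hj
        have hρj : ρ j < ρ i := hρ i hiR j hj
        have hm1 : m = (m-1)+1 := by omega
        have hm'1 : m' = (m'-1)+1 := by omega
        rw [hm1, hm'1]
        exact ih (ρ j) (by omega) j (m-1) (m'-1) le_rfl (by omega) (by omega)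
      refine if_congr ?_ rfl rfl
      constructor <;> intro h j hj <;> have h' := h j hj <;>
        [rw [← hcong j hj]; rw [hcong j hj]] <;> exact h'

lemma valN_R {m : ℕ} (hm : 1 ≤ m) {i : Fin n} (hiR : i ∈ R) : valN adj a b R m i = false := by
  obtain ⟨m', rfl⟩ : ∃ m', m = m' + 1 := ⟨m - 1, by omega⟩
  rw [valN_succ, if_pos hiR]

lemma valN_W (ρ : Fin n → ℕ) (hρ : ∀ i, i ∉ R → ∀ j, adj j i → ρ j < ρ i)
    {m : ℕ} (hm : 2 ≤ m) {i : Fin n} (hρi : ρ i ≤ m - 1) (hiR : i ∉ R) :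
    (valN adj a b R m i = true ↔ ∀ j, adj j i →
      (if j = a ∧ i = b then !(valN adj a b R m j) else valN adj a b R m j) = true) := by
  obtain ⟨m', rfl⟩ : ∃ m', m = m' + 1 := ⟨m - 1, by omega⟩
  have hval : ∀ j, adj j i → valN adj a b R (m'+1) j = valN adj a b R m' j := by
    intro j hj
    have hρj : ρ j ≤ m' - 1 := by have := hρ i hiR j hj; omega
    obtain ⟨m'', rfl⟩ : ∃ m'', m' = m'' + 1 := ⟨m' - 1, by omega⟩
    exact valN_stab ρ hρ (ρ j) j (m''+1) m'' le_rfl (by omega) (by omega)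
  conv_lhs => rw [valN_succ, if_neg hiR]
  constructor
  · intro hh
    have hcond : ∀ j, adj j i →
        (if j = a ∧ i = b then !(valN adj a b R m' j) else valN adj a b R m' j) = true := by
      by_contra hc
      rw [if_neg hc] at hh
      exact Bool.false_ne_true hh
    intro j hj
    have h1 := hcond j hj
    rw [hval j hj]
    exact h1
  · intro hh
    rw [if_pos ?_]
    intro j hj
    rw [← hval j hj]
    exact hh j hj


theorem cert_exists (hn : 2 ≤ n) (adj : Fin n → Fin n → Prop)
    (hstrong : ∀ p v, ReflTransGen adj p v) (hloop : ∃ w, adj w w) :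
    Nonempty (Cert n adj) := by
  obtain ⟨u0, hu0⟩ := hloop
  set Gm : Fin n → Fin n → Fin n → Fin n → Prop :=
    fun a b p z => adj p z ∧ ¬(p = a ∧ z = b) with hGmdef
  set Rst : Fin n → Fin n → Finset (Fin n) := fun a b => ast (Gm a b) u0 (n-1) with hRstdef
  have mem_Rst : ∀ a b v, v ∈ Rst a b ↔ ReflTransGen (Gm a b) u0 v := by
    intro a b v
    exact ⟨fun h => ast_rtg h, fun h => rtg_mem_ast_bound h⟩
  set Cand : Fin n → Fin n → Prop :=
    fun a b => adj a b ∧ ¬(a = u0 ∧ b = u0) ∧ ReflTransGen (Gm a b) a u0 with hCanddef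
  -- a candidate exists
  have hcand_ne : ∃ e : Fin n × Fin n, Cand e.1 e.2 := by
    have hex_k : ∃ k, adj u0 k ∧ k ≠ u0 := by
      obtain ⟨v, hv⟩ := Fintype.exists_ne_of_one_lt_card (by simp; omega) u0
      by_contra hcon
      push_neg at hcon
      have hcl : ∀ p ∈ ({u0} : Finset (Fin n)), ∀ z, adj p z → z ∈ ({u0} : Finset (Fin n)) := by
        intro w hw z hz
        rw [Finset.mem_singleton] at hw ⊢
        exact hcon z (hw ▸ hz)
      have := closed_rtg hcl (by simp) (hstrong u0 v)
      rw [Finset.mem_singleton] at this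
      exact hv this
    obtain ⟨k, huk, hku⟩ := hex_k
    exact ⟨(u0, k), huk, fun hh => hku hh.2, .refl⟩
  -- maximal candidate
  set CF : Finset (Fin n × Fin n) := Finset.univ.filter (fun e => Cand e.1 e.2) with hCF
  have hCFne : CF.Nonempty := by
    obtain ⟨e, he⟩ := hcand_ne
    exact ⟨e, Finset.mem_filter.2 ⟨Finset.mem_univ _, he⟩⟩
  obtain ⟨e, heCF, hemax⟩ := CF.exists_max_image (fun e => (Rst e.1 e.2).card) hCFne
  obtain ⟨a, b⟩ := e
  have haCand : Cand a b := by
    have := Finset.mem_filter.1 heCF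
    exact this.2
  obtain ⟨hab, hnuu, hrtga⟩ := haCand
  set R : Finset (Fin n) := Rst a b with hRdef
  set W : Finset (Fin n) := Finset.univ \ R with hWdef
  have huR : u0 ∈ R := self_mem_ast (n-1)
  have hWmem : ∀ i, i ∈ W ↔ i ∉ R := by
    intro i; rw [hWdef, Finset.mem_sdiff]; simp
  -- ********* noK *********
  set rW : Fin n → Fin n → Prop := fun p z => adj p z ∧ p ∈ W ∧ z ∈ W with hrWdef
  have noK : ∀ v, v ∈ W → ¬ TransGen rW v v := by
    intro v0 hv0 hTG
    set rf : Fin n → Fin n → Prop := fun p z => adj z p with hrf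
    have hexB : ∀ v : Fin n, ∃ t, v ∈ ast rf u0 t := fun v => rtg_ast (rtg_flip (hstrong v u0))
    set dto : Fin n → ℕ := fun v => Nat.find (hexB v) with hdto
    have hdto_mem : ∀ v, v ∈ ast rf u0 (dto v) := fun v => Nat.find_spec (hexB v)
    have hdto_min : ∀ v t, v ∈ ast rf u0 t → dto v ≤ t := fun v t ht => Nat.find_le ht
    set K : Finset (Fin n) := W.filter (fun v => TransGen rW v v) with hK
    have hKne : K.Nonempty := ⟨v0, by rw [hK, Finset.mem_filter]; exact ⟨hv0, hTG⟩⟩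
    obtain ⟨c, hcK, hcmin⟩ := K.exists_min_image dto hKne
    have hcW : c ∈ W := (Finset.mem_filter.1 hcK).1
    have hcTG : TransGen rW c c := (Finset.mem_filter.1 hcK).2
    obtain ⟨y, hcy, hyc⟩ : ∃ y, rW c y ∧ ReflTransGen rW y c := by
      rcases (Relation.TransGen.head'_iff).1 hcTG with ⟨y, h1, h2⟩
      exact ⟨y, h1, h2⟩
    have hyK : y ∈ K := by
      rw [hK, Finset.mem_filter]
      exact ⟨hcy.2.2, TransGen.tail' hyc hcy⟩
    have hcu : c ≠ u0 := by
      intro h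
      rw [hWmem] at hcW
      exact hcW (h ▸ huR)
    have hl1 : 1 ≤ dto c := by
      by_contra h
      have h0 : dto c = 0 := by omega
      have := hdto_mem c
      rw [h0, ast_zero, Finset.mem_singleton] at this
      exact hcu this
    have hclm : c ∉ ast rf u0 (dto c - 1) := by
      intro hmem
      have := hdto_min c _ hmem
      omega
    have hcm : c ∈ ast rf u0 ((dto c - 1)+1) := by
      have := hdto_mem c
      have heq : dto c - 1 + 1 = dto c := by omega
      rwa [heq]
    rw [ast_succ, Finset.mem_union] at hcm
    rcases hcm with hcm | hcm
    · exact absurd hcm hclm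
    rw [Finset.mem_filter] at hcm
    obtain ⟨-, p1, hp1mem, hp1r⟩ := hcm
    have hdtop1 : dto p1 ≤ dto c - 1 := hdto_min _ _ hp1mem
    have hp1y : p1 ≠ y := by
      intro h
      have h2 := hcmin y hyK
      rw [h] at hdtop1
      omega
    obtain ⟨m, hm, w, hw0, hwm, hws⟩ := mem_ast_walk hp1mem
    have havoid : ∀ j, j ≤ m → w j ≠ c := by
      intro j hj he
      have hmem : c ∈ ast rf u0 j := he ▸ walk_mem_ast w hw0 hws j hj
      have := hdto_min c _ hmem
      omega
    have hrtg_cu : ReflTransGen (Gm c y) c u0 := by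
      have hsteps : ∀ s, s < m → (Gm c y) ((fun s => w (m - s)) s) ((fun s => w (m - s)) (s+1)) := by
        intro s hs
        have hr := hws (m - (s+1)) (by omega)
        have heq : m - (s+1) + 1 = m - s := by omega
        rw [heq] at hr
        exact ⟨hr, fun hh => havoid (m - s) (by omega) hh.1⟩
      have hw' := walk_rtg (r := Gm c y) (fun s => w (m - s)) hsteps
      simp only [Nat.sub_zero, Nat.sub_self] at hw'
      rw [hw0, hwm] at hw'
      exact .head ⟨hp1r, fun hh => hp1y hh.2⟩ hw'
    have hcand' : Cand c y := ⟨hcy.1, fun hh => hcu hh.1, hrtg_cu⟩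
    have hRR' : R ⊆ Rst c y := by
      intro v hv
      rw [mem_Rst] at hv
      rw [mem_Rst]
      induction hv with
      | refl => exact .refl
      | tail h1 h2 ih =>
        refine .tail ih ⟨h2.1, ?_⟩
        rintro ⟨hh1, hh2⟩
        have hxR : _ ∈ R := (mem_Rst a b _).2 h1
        rw [hh1] at hxR
        rw [hWmem] at hcW
        exact hcW hxR
    have hbR : b ∉ R := by
      intro hbmem
      have hclosed : ∀ p ∈ R, ∀ z, adj p z → z ∈ R := by
        intro p hp z hz
        by_cases hcase : p = a ∧ z = b
        · rw [hcase.2]; exact hbmem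
        · rw [mem_Rst] at hp ⊢
          exact .tail hp ⟨hz, hcase⟩
      have := closed_rtg hclosed huR (hstrong u0 c)
      rw [hWmem] at hcW
      exact hcW this
    have hstrict : R ⊂ Rst c y := by
      rw [Finset.ssubset_iff_of_subset hRR']
      by_cases hbR' : b ∈ Rst c y
      · exact ⟨b, hbR', hbR⟩
      · refine ⟨c, ?_, (hWmem c).1 hcW⟩
        by_contra hcR'
        have hclosed' : ∀ p ∈ Rst c y, ∀ z, adj p z → z ∈ Rst c y := by
          intro p hp z hz
          rw [mem_Rst] at hp ⊢
          refine .tail hp ⟨hz, ?_⟩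
          rintro ⟨h1, h2⟩
          exact hcR' (h1 ▸ (mem_Rst c y p).2 hp)
        have huR' : u0 ∈ Rst c y := (mem_Rst c y u0).2 .refl
        exact hbR' (closed_rtg hclosed' huR' (hstrong u0 b))
    have hlt := Finset.card_lt_card hstrict
    have hle := hemax (c, y) (by rw [hCF, Finset.mem_filter]; exact ⟨Finset.mem_univ _, hcand'⟩)
    simp only at hle
    omega
  -- ********* entry *********
  have hexR : ∀ i, i ∈ R → ∃ t, i ∈ ast (Gm a b) u0 t := fun i hi => ⟨n-1, hi⟩
  set entry : Fin n → ℕ := fun i =>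
    if h : ∃ t, i ∈ ast (Gm a b) u0 t then Nat.find h else 0 with hentrydef
  have hentry_mem : ∀ i, i ∈ R → i ∈ ast (Gm a b) u0 (entry i) := by
    intro i hi
    simp only [hentrydef]
    split
    next h => exact Nat.find_spec h
    next h => exact absurd (hexR i hi) h
  have hentry_min : ∀ i t, i ∈ ast (Gm a b) u0 t → entry i ≤ t := by
    intro i t ht
    simp only [hentrydef]
    split
    next h => exact Nat.find_le ht
    next h => omega
  have hentry_u : entry u0 = 0 := Nat.le_zero.1 (hentry_min u0 0 (self_mem_ast 0))
  have hentry_le : ∀ i, i ∈ R → entry i ≤ n - 1 := fun i hi => hentry_min i _ hi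
  have hentry_bound : ∀ i, i ∈ R → entry i + 1 ≤ R.card := by
    intro i hi
    have hgrow := ast_growth (hentry_mem i hi) (fun s hs => hentry_min i s hs) (entry i) le_rfl
    have hsub : ast (Gm a b) u0 (entry i) ⊆ R := ast_mono (hentry_le i hi)
    have := Finset.card_le_card hsub
    omega
  have hentry_pred : ∀ i, i ∈ R → i ≠ u0 →
      ∃ j, j ∈ R ∧ entry j < entry i ∧ adj j i ∧ ¬(j = a ∧ i = b) := by
    intro i hi hiu
    have h1 : 1 ≤ entry i := by
      by_contra h
      have h0 : entry i = 0 := by omega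
      have := hentry_mem i hi
      rw [h0, ast_zero, Finset.mem_singleton] at this
      exact hiu this
    have h2 : entry i ≤ n - 1 := hentry_le i hi
    have hmem : i ∈ ast (Gm a b) u0 ((entry i - 1) + 1) := by
      have := hentry_mem i hi
      have heq : entry i - 1 + 1 = entry i := by omega
      rwa [heq]
    rw [ast_succ, Finset.mem_union] at hmem
    rcases hmem with hmem | hmem
    · have := hentry_min i _ hmem
      omega
    · simp only [Finset.mem_filter] at hmem
      obtain ⟨-, j, hjmem, hjr⟩ := hmem
      have hjR : j ∈ R := ast_mono (by omega : entry i - 1 ≤ n - 1) hjmem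
      have hje : entry j ≤ entry i - 1 := hentry_min j _ hjmem
      exact ⟨j, hjR, by omega, hjr.1, hjr.2⟩
  -- ********* rank *********
  set rank : Fin n → ℕ := fun i => (W.filter (fun j => ReflTransGen rW j i)).card with hrankdef
  have hrank_pos : ∀ i, i ∈ W → 1 ≤ rank i := by
    intro i hi
    simp only [hrankdef]
    have hmem : i ∈ W.filter (fun j => ReflTransGen rW j i) :=
      Finset.mem_filter.2 ⟨hi, .refl⟩
    have := Finset.card_pos.2 ⟨i, hmem⟩
    omega
  have hrank_lt : ∀ i j, i ∈ W → j ∈ W → adj j i → rank j < rank i := by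
    intro i j hiW hjW hja
    have hsub : W.filter (fun z => ReflTransGen rW z j) ⊆ W.filter (fun z => ReflTransGen rW z i) := by
      intro z hz
      rw [Finset.mem_filter] at hz ⊢
      exact ⟨hz.1, .tail hz.2 ⟨hja, hjW, hiW⟩⟩
    have hin : i ∈ W.filter (fun z => ReflTransGen rW z i) := Finset.mem_filter.2 ⟨hiW, .refl⟩
    have hnotin : i ∉ W.filter (fun z => ReflTransGen rW z j) := by
      intro hmem
      rw [Finset.mem_filter] at hmem
      exact noK i hiW (TransGen.tail' hmem.2 ⟨hja, hjW, hiW⟩)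
    simp only [hrankdef]
    exact Finset.card_lt_card ((Finset.ssubset_iff_of_subset hsub).2 ⟨i, hin, hnotin⟩)
  have hrank_le : ∀ i, rank i ≤ W.card := by
    intro i
    simp only [hrankdef]
    exact Finset.card_le_card (Finset.filter_subset _ _)
  -- ********* rho and val *********
  set ρ : Fin n → ℕ := fun i => if i ∈ R then 0 else rank i with hρdef
  have hρprop : ∀ i, i ∉ R → ∀ j, adj j i → ρ j < ρ i := by
    intro i hiR j hja
    have hiW : i ∈ W := (hWmem i).2 hiR
    simp only [hρdef]
    rw [if_neg hiR]
    by_cases hjR : j ∈ R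
    · rw [if_pos hjR]
      exact hrank_pos i hiW
    · rw [if_neg hjR]
      exact hrank_lt i j hiW ((hWmem j).2 hjR) hja
  -- ********* card facts *********
  have hRcard1 : 1 ≤ R.card := Finset.card_pos.2 ⟨u0, huR⟩
  have hRcardn : R.card ≤ n := by
    have := Finset.card_le_card (Finset.subset_univ R)
    simpa using this
  have hWcard : W.card = n - R.card := by
    rw [hWdef, Finset.card_sdiff_of_subset (Finset.subset_univ R)]
    simp
  -- ********* walks *********
  obtain ⟨q, hqle, wa, hwa0, hwaq, hwastep⟩ := mem_ast_walk (rtg_mem_ast_bound hrtga)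
  have hrtgb : ReflTransGen (Gm a b) b u0 := by
    have hcl : ∀ x ∈ Finset.univ.filter (fun z => ReflTransGen (Gm a b) b z),
        ∀ z, adj x z → z ∈ Finset.univ.filter (fun z => ReflTransGen (Gm a b) b z) := by
      intro x hx z hz
      rw [Finset.mem_filter] at hx ⊢
      refine ⟨Finset.mem_univ _, ?_⟩
      by_cases hcase : x = a ∧ z = b
      · rw [hcase.2]
      · exact .tail hx.2 ⟨hz, hcase⟩
    have hb0 : b ∈ Finset.univ.filter (fun z => ReflTransGen (Gm a b) b z) :=
      Finset.mem_filter.2 ⟨Finset.mem_univ _, .refl⟩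
    have := closed_rtg hcl hb0 (hstrong b u0)
    exact (Finset.mem_filter.1 this).2
  obtain ⟨p, hple, wb, hwb0, hwbp, hwbstep⟩ := mem_ast_walk (rtg_mem_ast_bound hrtgb)
  set Tu : ℕ := max (p+1) q with hTudef
  have hTu1 : p + 1 ≤ Tu := le_max_left _ _
  have hTu2 : q ≤ Tu := le_max_right _ _
  have hTun : Tu ≤ n := max_le (by omega) (by omega)
  set time : Fin n → ℕ := fun i =>
    if i ∈ R then Tu + entry i else Tu + (R.card - 1) + rank i with htimedef
  have htime_u : time u0 = Tu := by
    simp only [htimedef]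
    rw [if_pos huR, hentry_u]
    omega

  -- ********* assemble *********
  refine ⟨⟨u0, a, b, hu0, hab, hnuu, valN adj a b R n, time, ?_, p, q, wa, wb,
    hwa0, hwaq, ?_, hwb0, hwbp, ?_, ?_, ?_, ?_, ?_, ?_⟩⟩
  · exact valN_R (by omega) huR
  · exact fun s hs => hwastep s hs
  · exact fun s hs => hwbstep s hs
  · rw [htime_u]; exact hTu1
  · rw [htime_u]; exact hTu2
  · -- rules
    intro i hiu
    by_cases hiR : i ∈ R
    · refine Or.inl ⟨valN_R (by omega) hiR, ?_⟩
      obtain ⟨j, hjR, hje, hja, hjne⟩ := hentry_pred i hiR hiu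
      refine ⟨j, hja, hjne, valN_R (by omega) hjR, ?_⟩
      simp only [htimedef]
      rw [if_pos hjR, if_pos hiR]
      omega
    · have hiW : i ∈ W := (hWmem i).2 hiR
      refine Or.inr ⟨?_, ?_⟩
      · intro j hja
        simp only [htimedef]
        rw [if_neg hiR]
        by_cases hjR : j ∈ R
        · rw [if_pos hjR]
          have h1 := hentry_bound j hjR
          have h2 := hrank_pos i hiW
          omega
        · rw [if_neg hjR]
          have := hrank_lt i j hiW ((hWmem j).2 hjR) hja
          omega
      · refine valN_W ρ hρprop (by omega) ?_ hiR
        simp only [hρdef]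
        rw [if_neg hiR]
        have h1 := hrank_le i
        omega
  · -- deadline
    intro i
    simp only [htimedef]
    by_cases hiR : i ∈ R
    · rw [if_pos hiR]
      have := hentry_bound i hiR
      omega
    · rw [if_neg hiR]
      have h1 := hrank_le i
      omega
  · -- timepos
    intro i
    simp only [htimedef]
    by_cases hiR : i ∈ R
    · rw [if_pos hiR]; omega
    · rw [if_neg hiR]; omega




end S12

/-- a strongly connected digraph on `n ≥ 2` vertices with a loop admits a boolean
function (with that interaction digraph) whose `(2n−1)`-st iterate is constant. -/
theorem stmt12 (n : ℕ) (adj : Fin n → Fin n → Prop) (hn : 2 ≤ n)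
    (hstrong : ∀ u v, Relation.ReflTransGen adj u v)
    (hloop : ∃ u, adj u u) :
    ∃ f : (Fin n → Bool) → (Fin n → Bool),
      (∀ j i, dependsB f j i ↔ adj j i) ∧
      ∃ c, f^[2 * n - 1] = Function.const _ c := by
  obtain ⟨C⟩ := S12.cert_exists hn adj hstrong hloop
  exact ⟨S12.gate adj C.a C.b, S12.gate_depends, C.val, C.dynamics⟩
end

section
/- Every connected undirected graph G other than K₂ (with at least one vertex) admits a boolean function f : {0,1}ⁿ → {0,1}ⁿ whose interaction digraph, forgetting signs, is the symmetric digraph of G, and such that f³ is constant. The graph K₂ (single edge on two vertices) admits no nilpotent boolean function. -/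
open Function

namespace SimpleGraph

variable {V : Type*} {G : SimpleGraph V}

theorem Connected.eq_or_eq_of_adj_of_subsingleton_neighborSet (hG : G.Connected) {u v : V}
    (huv : G.Adj u v) (hu : (G.neighborSet u).Subsingleton)
    (hv : (G.neighborSet v).Subsingleton) (x : V) : x = u ∨ x = v := by
  have closed : ∀ {y z : V}, G.Walk y z → (y = u ∨ y = v) → z = u ∨ z = v := by
    intro y z p
    induction p with
    | nil => exact id
    | cons h _ ih =>
      rintro (rfl | rfl)
      · exact ih (Or.inr (hu h huv))
      · exact ih (Or.inl (hv h huv.symm))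
  exact closed (hG.preconnected u x).some (Or.inl rfl)

theorem Connected.isIndepSet_setOf_subsingleton_neighborSet (hG : G.Connected)
    (hV : Nat.card V ≠ 2) : G.IsIndepSet {v | (G.neighborSet v).Subsingleton} := by
  intro u hu v hv _ huv
  refine hV (Nat.card_eq_two_iff.2 ⟨u, v, huv.ne, ?_⟩)
  ext x
  simpa using hG.eq_or_eq_of_adj_of_subsingleton_neighborSet huv hu hv x

theorem exists_adj_mem_of_maximal_isIndepSet {I : Set V} (hI : Maximal G.IsIndepSet I) {v : V}
    (hv : v ∉ I) : ∃ u ∈ I, G.Adj v u := by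
  by_contra! hno
  have hins : G.IsIndepSet (insert v I) :=
    (Set.pairwise_insert_of_notMem hv).2
      ⟨hI.prop, fun u hu => ⟨hno u hu, fun h => hno u hu h.symm⟩⟩
  exact hv (hI.eq_of_subset hins (Set.subset_insert v I) ▸ Set.mem_insert v I)

theorem Connected.exists_isIndepSet_adj_mem (hG : G.Connected) [Finite V]
    (hV : Nat.card V ≠ 2) : ∃ I : Set V, G.IsIndepSet I ∧ ∃ B : V → V,
      ∀ v ∉ I, B v ∈ I ∧ G.Adj v (B v) ∧ ∃ a, G.Adj v a ∧ a ≠ B v := by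
  obtain ⟨I, hLI, hI⟩ :=
    Finite.exists_le_maximal (hG.isIndepSet_setOf_subsingleton_neighborSet hV)
  refine ⟨I, hI.prop, ?_⟩
  have hB : ∀ v, ∃ b, v ∉ I → b ∈ I ∧ G.Adj v b ∧ ∃ a, G.Adj v a ∧ a ≠ b := by
    intro v
    by_cases hv : v ∈ I
    · exact ⟨v, fun h => absurd hv h⟩
    obtain ⟨b, hbI, hvb⟩ := exists_adj_mem_of_maximal_isIndepSet hI hv
    have hnt : (G.neighborSet v).Nontrivial := Set.not_subsingleton_iff.1 fun h => hv (hLI h)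
    obtain ⟨a, hva, hab⟩ := hnt.exists_ne b
    exact ⟨b, fun _ => ⟨hbI, hvb, a, hva, hab⟩⟩
  choose B hB using hB
  exact ⟨B, hB⟩

theorem Connected.eq_top_of_fin_two {G : SimpleGraph (Fin 2)} (hG : G.Connected) : G = ⊤ := by
  ext u v
  rw [top_adj]
  refine ⟨Adj.ne, fun huv => ?_⟩
  obtain ⟨d, -, hdu, hdv⟩ :=
    (hG.preconnected u v).some.exists_boundary_dart {u} rfl (by simpa using huv.symm)
  have hd : d.snd = v := by
    simp only [Set.mem_singleton_iff] at hdu hdv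
    omega
  exact hdu ▸ hd ▸ d.adj

end SimpleGraph

section AndNetwork

variable {V : Type*} [Fintype V] (G : SimpleGraph V) [DecidableRel G.Adj] (w : V → V → Bool)

/-- `andNet G w x i` is the conjunction over the neighbours `j` of `i` of the literal `xⱼ` when
`w i j = true` and `¬xⱼ` when `w i j = false`. -/
def andNet (x : V → Bool) (i : V) : Bool :=
  decide (∀ j, G.Adj i j → x j = w i j)

variable {G w}

theorem andNet_eq_true_iff {x : V → Bool} {i : V} :
    andNet G w x i = true ↔ ∀ j, G.Adj i j → x j = w i j :=
  decide_eq_true_iff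

theorem andNet_congr {x y : V → Bool} {i : V} (h : ∀ j, G.Adj i j → x j = y j) :
    andNet G w x i = andNet G w y i :=
  decide_eq_decide.2 (forall₂_congr fun j hj => by rw [h j hj])

theorem andNet_andNet_eq_false {i a b : V} (ha : G.Adj i a) (hb : G.Adj i b)
    (hwa : w i a = true) (hwb : w i b = true) (hab : w a i ≠ w b i) (x : V → Bool) :
    andNet G w (andNet G w x) i = false := by
  by_contra h
  rw [Bool.not_eq_false, andNet_eq_true_iff] at h
  have hxa := andNet_eq_true_iff.1 ((h a ha).trans hwa) i ha.symm
  have hxb := andNet_eq_true_iff.1 ((h b hb).trans hwb) i hb.symm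
  exact hab (hxa.symm.trans hxb)

theorem exists_andNet_iterate_three_eq_const {I : Set V} (hI : G.IsIndepSet I) {B : V → V}
    (hB : ∀ v ∉ I, B v ∈ I ∧ G.Adj v (B v) ∧ ∃ a, G.Adj v a ∧ a ≠ B v) :
    ∃ w c, (andNet G w)^[3] = const _ c := by
  classical
  set w : V → V → Bool := fun i j => !decide (j ∉ I ∧ i = B j)
  have vanish : ∀ x, ∀ i ∉ I, andNet G w (andNet G w x) i = false := by
    intro x i hi
    obtain ⟨hBI, hiB, a, hia, haB⟩ := hB i hi
    refine andNet_andNet_eq_false hia hiB ?_ ?_ ?_ x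
    · simp only [w, Bool.not_eq_true', decide_eq_false_iff_not, not_and]
      exact fun haI hBa => hi (hBa ▸ (hB a haI).1)
    · simp [w, hBI]
    · simp [w, hi, haB]
  refine ⟨w, (andNet G w)^[3] (const V false), funext fun x => ?_⟩
  show andNet G w (andNet G w (andNet G w x)) = andNet G w (andNet G w (andNet G w _))
  funext i
  by_cases hi : i ∈ I
  · refine andNet_congr fun j hij => ?_
    have hj : j ∉ I := fun hj => hI hi hj hij.ne hij
    rw [vanish _ j hj, vanish _ j hj]
  · rw [vanish _ i hi, vanish _ i hi]

end AndNetwork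

theorem dependsB_andNet_iff {n : ℕ} {G : SimpleGraph (Fin n)} [DecidableRel G.Adj]
    {w : Fin n → Fin n → Bool} {j i : Fin n} : dependsB (andNet G w) j i ↔ G.Adj j i := by
  constructor
  · rintro ⟨x, y, hxy, hne⟩
    by_contra hji
    exact hne (andNet_congr fun k hik => hxy k fun hkj => hji (hkj ▸ hik.symm))
  · intro hji
    refine ⟨update (w i) j (!w i j), w i, fun k hk => update_of_ne hk _ _, ?_⟩
    have hx : andNet G w (update (w i) j (!w i j)) i = false := by
      by_contra h
      rw [Bool.not_eq_false, andNet_eq_true_iff] at h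
      simpa using h j hji.symm
    have hy : andNet G w (w i) i = true := andNet_eq_true_iff.2 fun _ _ => rfl
    rw [hx, hy]
    decide

theorem apply_eq_apply_iff_of_dependsB {n : ℕ} {f : (Fin n → Bool) → (Fin n → Bool)}
    {i j : Fin n} (hdep : dependsB f j i) (honly : ∀ x y, x j = y j → f x i = f y i)
    (x y : Fin n → Bool) : f x i = f y i ↔ x j = y j := by
  refine ⟨fun hxy => ?_, honly x y⟩
  obtain ⟨x', y', -, hne⟩ := hdep
  have hne' : x' j ≠ y' j := fun h => hne (honly x' y' h)
  by_contra h
  have key : ∀ a b c d : Bool, a ≠ b → c ≠ d → (a = c ∧ b = d) ∨ (a = d ∧ b = c) := by decide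
  rcases key _ _ _ _ h hne' with ⟨hx, hy⟩ | ⟨hx, hy⟩
  · exact hne (by rw [← honly x x' hx, ← honly y y' hy, hxy])
  · exact hne (by rw [← honly x y' hx, ← honly y x' hy, hxy])

theorem injective_of_dependsB_iff_ne {f : (Fin 2 → Bool) → (Fin 2 → Bool)}
    (hf : ∀ j i, dependsB f j i ↔ j ≠ i) : Injective f := by
  have honly : ∀ i j, j ≠ i → ∀ x y : Fin 2 → Bool, x j = y j → f x i = f y i := by
    intro i j hji x y hxy
    by_contra hne
    refine (hf i i).1 ⟨x, y, fun k hki => ?_, hne⟩ rfl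
    rwa [show k = j by omega]
  intro x y hxy
  funext k
  have hk : k + 1 ≠ k := by omega
  exact (apply_eq_apply_iff_of_dependsB ((hf k (k + 1)).2 hk.symm)
    (honly (k + 1) k hk.symm) x y).1 (congrFun hxy (k + 1))

theorem stmt15_general (n : ℕ) (G : SimpleGraph (Fin n)) (hconn : G.Connected) :
    (n ≠ 2 → ∃ f : (Fin n → Bool) → (Fin n → Bool),
      (∀ j i, dependsB f j i ↔ G.Adj j i) ∧ ∃ c, f^[3] = Function.const _ c) ∧
    (n = 2 → ∀ f : (Fin n → Bool) → (Fin n → Bool),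
      (∀ j i, dependsB f j i ↔ G.Adj j i) →
      ¬ ∃ (k : ℕ) (c : Fin n → Bool), f^[k] = Function.const _ c) := by
  classical
  refine ⟨fun hne => ?_, ?_⟩
  · obtain ⟨I, hI, B, hB⟩ := hconn.exists_isIndepSet_adj_mem (by simpa using hne)
    obtain ⟨w, c, hc⟩ := exists_andNet_iterate_three_eq_const hI hB
    exact ⟨andNet G w, fun _ _ => dependsB_andNet_iff, c, hc⟩
  · rintro rfl f hf ⟨k, c, hk⟩
    rw [hconn.eq_top_of_fin_two] at hf
    have hinj : Injective f^[k] := (injective_of_dependsB_iff_ne (by simpa using hf)).iterate k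
    exact not_injective_const (hk ▸ hinj)

/-- every connected graph on `n ≥ 1` vertices other than `K₂` (i.e. `n ≠ 2`)
admits a boolean function whose interaction digraph is the symmetric digraph of the graph and
whose cube is constant; for `K₂` (i.e. `n = 2`, where connectedness forces the single edge),
no such boolean function is nilpotent. -/
theorem stmt15 (n : ℕ) (hn : 0 < n) (G : SimpleGraph (Fin n)) (hconn : G.Connected) :
    (n ≠ 2 → ∃ f : (Fin n → Bool) → (Fin n → Bool),
      (∀ j i, dependsB f j i ↔ G.Adj j i) ∧ ∃ c, f^[3] = Function.const _ c) ∧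
    (n = 2 → ∀ f : (Fin n → Bool) → (Fin n → Bool),
      (∀ j i, dependsB f j i ↔ G.Adj j i) →
      ¬ ∃ (k : ℕ) (c : Fin n → Bool), f^[k] = Function.const _ c) :=
  stmt15_general n G hconn
end

section
/- In every connected graph G that is not complete, there exists a nonempty independent-like set I of vertices such that the pairwise distance between distinct vertices of I is at least 3, every vertex not in I is at distance at most 2 from I, and no degree-one vertex of G is adjacent to a vertex of I. -/
private lemma leaf_unique_nbr {n : ℕ} {G : SimpleGraph (Fin n)} [DecidableRel G.Adj]
    {s i y : Fin n} (hs : G.degree s = 1) (hi : G.Adj s i) (hy : G.Adj s y) : y = i := by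
  obtain ⟨a, ha⟩ := Finset.card_eq_one.mp hs
  have h1 : i ∈ G.neighborFinset s := by simpa using hi
  have h2 : y ∈ G.neighborFinset s := by simpa using hy
  rw [ha, Finset.mem_singleton] at h1 h2
  rw [h1, h2]

private lemma leaf_dist {n : ℕ} {G : SimpleGraph (Fin n)} [DecidableRel G.Adj]
    (hconn : G.Connected) {s i j : Fin n} (hs : G.degree s = 1) (hi : G.Adj s i)
    (hj : j ≠ s) : G.dist i j + 1 ≤ G.dist s j := by
  obtain ⟨p, hp⟩ := hconn.exists_walk_length_eq_dist s j
  cases p with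
  | nil => exact absurd rfl hj
  | cons h q =>
    rename_i x
    have hx : x = i := leaf_unique_nbr hs hi h
    subst hx
    have := SimpleGraph.dist_le q
    simp only [SimpleGraph.Walk.length_cons] at hp
    omega

/-- every connected non-complete graph has a nonempty set `I` of vertices with
pairwise distances `≥ 3`, every other vertex at distance `≤ 2` from `I`, and no degree-one
vertex adjacent to `I`. -/
theorem stmt16 (n : ℕ) (G : SimpleGraph (Fin n)) [DecidableRel G.Adj]
    (hconn : G.Connected)
    (hnotcomplete : ∃ u v : Fin n, u ≠ v ∧ ¬ G.Adj u v) :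
    ∃ I : Finset (Fin n), I.Nonempty ∧
      (∀ i ∈ I, ∀ j ∈ I, i ≠ j → 3 ≤ G.dist i j) ∧
      (∀ u, u ∉ I → ∃ i ∈ I, G.dist u i ≤ 2) ∧
      (∀ s : Fin n, G.degree s = 1 → ∀ i ∈ I, ¬ G.Adj s i) := by
  classical
  set f : Finset (Fin n) → ℕ :=
    fun J => (J.filter (fun v => G.degree v = 1)).card * (n + 1) + J.card with hf
  set P : Finset (Finset (Fin n)) :=
    Finset.univ.filter
      (fun J => J.Nonempty ∧ ∀ i ∈ J, ∀ j ∈ J, i ≠ j → 3 ≤ G.dist i j) with hP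
  obtain ⟨u0, v0, huv, hnadj⟩ := hnotcomplete
  have hPne : P.Nonempty := by
    refine ⟨{u0}, ?_⟩
    simp only [hP, Finset.mem_filter, Finset.mem_univ, true_and]
    refine ⟨Finset.singleton_nonempty _, ?_⟩
    intro i hi j hj hne
    simp only [Finset.mem_singleton] at hi hj
    exact absurd (hi.trans hj.symm) hne
  obtain ⟨I, hIP, hmax⟩ := P.exists_max_image f hPne
  simp only [hP, Finset.mem_filter, Finset.mem_univ, true_and] at hIP
  obtain ⟨hIne, hpack⟩ := hIP
  have hmax' : ∀ J : Finset (Fin n), J.Nonempty →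
      (∀ i ∈ J, ∀ j ∈ J, i ≠ j → 3 ≤ G.dist i j) → f J ≤ f I := by
    intro J h1 h2
    apply hmax
    simp only [hP, Finset.mem_filter, Finset.mem_univ, true_and]
    exact ⟨h1, h2⟩
  have hcard : ∀ J : Finset (Fin n), J.card ≤ n := fun J => by
    simpa using Finset.card_le_card (Finset.subset_univ J)
  refine ⟨I, hIne, hpack, ?_, ?_⟩
  · -- domination
    intro u hu
    by_contra hcon
    push_neg at hcon
    have hpack' : ∀ i ∈ insert u I, ∀ j ∈ insert u I, i ≠ j → 3 ≤ G.dist i j := by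
      intro i hi j hj hne
      rcases Finset.mem_insert.mp hi with hi2 | hi2 <;>
        rcases Finset.mem_insert.mp hj with hj2 | hj2
      · exact absurd (hi2.trans hj2.symm) hne
      · subst hi2; have := hcon j hj2; omega
      · subst hj2; have := hcon i hi2; rw [SimpleGraph.dist_comm]; omega
      · exact hpack i hi2 j hj2 hne
    have hle := hmax' (insert u I) ⟨u, Finset.mem_insert_self u I⟩ hpack'
    have h1 : (insert u I).card = I.card + 1 := Finset.card_insert_of_notMem hu
    have h2 : (I.filter (fun v => G.degree v = 1)).card
        ≤ ((insert u I).filter (fun v => G.degree v = 1)).card :=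
      Finset.card_le_card (Finset.filter_subset_filter _ (Finset.subset_insert u I))
    simp only [hf] at hle
    nlinarith
  · -- no leaf adjacent
    intro s hs i hiI hadj
    have hsi : s ≠ i := G.ne_of_adj hadj
    have hsnI : s ∉ I := by
      intro hsI
      have h3 := hpack s hsI i hiI hsi
      have h1 : G.dist s i ≤ 1 := by
        have := SimpleGraph.dist_le hadj.toWalk
        simpa using this
      omega
    -- i is not a leaf
    have hinotleaf : G.degree i ≠ 1 := by
      intro hdi
      have key : ∀ v : Fin n, v = s ∨ v = i := by
        have aux : ∀ {x v : Fin n} (_ : G.Walk x v), (x = s ∨ x = i) → (v = s ∨ v = i) := by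
          intro x v w
          induction w with
          | nil => exact id
          | cons h p ih =>
            rename_i a b c
            intro hx
            apply ih
            rcases hx with hx | hx
            · subst hx; right; exact leaf_unique_nbr hs hadj h
            · subst hx; left; exact leaf_unique_nbr hdi hadj.symm h
        intro v
        obtain ⟨w⟩ := hconn s v
        exact aux w (Or.inl rfl)
      rcases key u0 with h1 | h1 <;> rcases key v0 with h2 | h2 <;> subst h1 <;> subst h2
      · exact huv rfl
      · exact hnadj hadj
      · exact hnadj hadj.symm
      · exact huv rfl
    -- swap i for s
    set I' : Finset (Fin n) := insert s (I.erase i) with hI'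
    have hsne : s ∉ I.erase i := fun h => hsnI (Finset.mem_of_mem_erase h)
    have hpack' : ∀ a ∈ I', ∀ b ∈ I', a ≠ b → 3 ≤ G.dist a b := by
      intro a ha b hb hne
      rcases Finset.mem_insert.mp ha with ha2 | ha2 <;>
        rcases Finset.mem_insert.mp hb with hb2 | hb2
      · exact absurd (ha2.trans hb2.symm) hne
      · rw [ha2]
        obtain ⟨hbi, hbI⟩ := Finset.mem_erase.mp hb2
        have h1 := hpack i hiI b hbI (fun h => hbi h.symm)
        have h2 := leaf_dist hconn hs hadj (fun h : b = s => hsnI (h ▸ hbI))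
        omega
      · rw [hb2]
        obtain ⟨hai, haI⟩ := Finset.mem_erase.mp ha2
        have h1 := hpack i hiI a haI (fun h => hai h.symm)
        have h2 := leaf_dist hconn hs hadj (fun h : a = s => hsnI (h ▸ haI))
        rw [SimpleGraph.dist_comm]
        omega
      · exact hpack a (Finset.mem_of_mem_erase ha2) b (Finset.mem_of_mem_erase hb2)
          hne
    have hle := hmax' I' ⟨s, Finset.mem_insert_self _ _⟩ hpack'
    have hcard' : I'.card = I.card := by
      rw [hI', Finset.card_insert_of_notMem hsne, Finset.card_erase_of_mem hiI]
      have : 1 ≤ I.card := Finset.card_pos.mpr ⟨i, hiI⟩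
      omega
    have hfilter : (I'.filter (fun v => G.degree v = 1)).card
        = (I.filter (fun v => G.degree v = 1)).card + 1 := by
      rw [hI', Finset.filter_insert, if_pos hs, Finset.filter_erase,
        Finset.erase_eq_of_notMem (by simp [hinotleaf]),
        Finset.card_insert_of_notMem (fun h => hsnI (Finset.mem_of_mem_filter _ h))]
    simp only [hf] at hle
    rw [hcard', hfilter] at hle
    nlinarith
end

section
/- Let G be a loop-less digraph on [n] with minimum in-degree at least 1, and let G̊ be G with a loop added at every vertex. If G is symmetric (i.e., an undirected graph), then G̊ admits a boolean function f : {0,1}ⁿ → {0,1}ⁿ with interaction digraph G̊ such that f³ is the constant 0; in general (not necessarily symmetric), G̊ admits such an f with f⁴ constant 0. -/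
open Function

section Network

variable {ι : Type*}

open Classical in
noncomputable def net (G : ι → Finset ι) (I : Set ι) : (ι → Bool) → ι → Bool :=
  fun x i => decide ((x i = true ↔ i ∉ I) ∧ ∀ j ∈ G i, x j = true)

def VanishesAt (f : (ι → Bool) → ι → Bool) (t : ℕ) (i : ι) : Prop :=
  ∀ x, f^[t] x i = false

variable {G : ι → Finset ι} {I : Set ι} {f : (ι → Bool) → ι → Bool} {i j : ι} {t s : ℕ}

theorem net_eq_true_iff {x : ι → Bool} :
    net G I x i = true ↔ (x i = true ↔ i ∉ I) ∧ ∀ j ∈ G i, x j = true := by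
  simp [net]

theorem net_congr {x y : ι → Bool} [DecidableEq ι] (h : ∀ k ∈ insert i (G i), x k = y k) :
    net G I x i = net G I y i := by
  have hG : ∀ j ∈ G i, x j = y j := fun j hj => h j (Finset.mem_insert_of_mem hj)
  rw [Bool.eq_iff_iff, net_eq_true_iff, net_eq_true_iff, h i (Finset.mem_insert_self _ _)]
  exact and_congr_right' (forall₂_congr fun j hj => by rw [hG j hj])

theorem VanishesAt.mono (h : VanishesAt f t i) (hts : t ≤ s) : VanishesAt f s i := fun x => by
  obtain ⟨k, rfl⟩ := Nat.exists_eq_add_of_le hts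
  rw [iterate_add_apply]
  exact h _

theorem iterate_eq_const_of_forall_vanishesAt (h : ∀ i, VanishesAt f t i) :
    f^[t] = const _ fun _ => false :=
  funext fun x => funext fun i => h i x

theorem net_vanishesAt_succ (hj : j ∈ G i) (h : VanishesAt (net G I) t j) :
    VanishesAt (net G I) (t + 1) i := fun x => by
  rw [iterate_succ_apply', Bool.eq_false_iff]
  intro hx
  exact Bool.false_ne_true ((h x).symm.trans ((net_eq_true_iff.1 hx).2 j hj))

theorem net_vanishesAt_two (hi : i ∉ I) (hj : j ∈ G i) (hjI : j ∈ I) :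
    VanishesAt (net G I) 2 i := fun x => by
  rw [iterate_succ_apply', iterate_one, Bool.eq_false_iff]
  intro h
  obtain ⟨hself, hG⟩ := net_eq_true_iff.1 h
  have hxj : x j = true := (net_eq_true_iff.1 (hself.2 hi)).2 j hj
  exact (net_eq_true_iff.1 (hG j hj)).1.1 hxj hjI

theorem net_iterate_three (hout : ∀ i ∉ I, ∃ j ∈ G i, j ∈ I)
    (hin : ∀ i ∈ I, ∃ j ∈ G i, j ∉ I) :
    (net G I)^[3] = const _ fun _ => false := by
  have h2 : ∀ i ∉ I, VanishesAt (net G I) 2 i := fun i hi =>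
    let ⟨_, hj, hjI⟩ := hout i hi
    net_vanishesAt_two hi hj hjI
  refine iterate_eq_const_of_forall_vanishesAt fun i => ?_
  by_cases hi : i ∈ I
  · obtain ⟨j, hj, hjI⟩ := hin i hi
    exact net_vanishesAt_succ hj (h2 j hjI)
  · exact (h2 i hi).mono (by norm_num)

theorem net_iterate_four (hout : ∀ i ∉ I, ∃ j ∈ G i, j ∈ I)
    (hin : ∀ i ∈ I, ∃ j ∈ G i, j ∉ I ∨ ∃ k ∈ G j, k ∉ I) :
    (net G I)^[4] = const _ fun _ => false := by
  have h2 : ∀ i ∉ I, VanishesAt (net G I) 2 i := fun i hi =>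
    let ⟨_, hj, hjI⟩ := hout i hi
    net_vanishesAt_two hi hj hjI
  refine iterate_eq_const_of_forall_vanishesAt fun i => ?_
  by_cases hi : i ∈ I
  · obtain ⟨j, hj, hjI | ⟨k, hk, hkI⟩⟩ := hin i hi
    · exact (net_vanishesAt_succ hj (h2 j hjI)).mono (by norm_num)
    · exact net_vanishesAt_succ hj (net_vanishesAt_succ hk (h2 k hkI))
  · exact (h2 i hi).mono (by norm_num)

end Network

theorem dependsB_net_iff {n : ℕ} {G : Fin n → Finset (Fin n)} {I : Set (Fin n)}
    (hloop : ∀ i, i ∉ G i) (j i : Fin n) :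
    dependsB (net G I) j i ↔ j ∈ insert i (G i) := by
  classical
  constructor
  · rintro ⟨x, y, hxy, hne⟩
    by_contra hj
    exact hne (net_congr fun k hk => hxy k (ne_of_mem_of_not_mem hk hj))
  · intro hj
    set x : Fin n → Bool := fun k => if k = i then decide (i ∉ I) else true
    have hx : net G I x i = true := net_eq_true_iff.2
      ⟨by simp [x], fun k hk => by simp [x, ne_of_mem_of_not_mem hk (hloop i)]⟩
    refine ⟨x, update x j (!x j), fun k hk => (update_of_ne hk _ _).symm, ?_⟩
    rw [hx]
    intro h
    obtain ⟨hi, hG⟩ := net_eq_true_iff.1 h.symm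
    rcases Finset.mem_insert.1 hj with rfl | hjG
    · by_cases hjI : j ∈ I <;> simp [x, hjI] at hi
    · simpa [x, ne_of_mem_of_not_mem hjG (hloop i)] using hG j hjG

section Combinatorics

variable {α : Type*} [Finite α]

theorem exists_maximal_independent (r : α → α → Prop) (P : Set α) (hirr : ∀ a, ¬ r a a) :
    ∃ R ⊆ P, (∀ a ∈ R, ∀ b ∈ R, ¬ r a b) ∧ ∀ a ∈ P, a ∉ R → ∃ b ∈ R, r a b ∨ r b a := by
  obtain ⟨R, ⟨hRP, hR⟩, hmax⟩ :=
    (Set.toFinite {R : Set α | R ⊆ P ∧ ∀ a ∈ R, ∀ b ∈ R, ¬ r a b}).exists_maximal ⟨∅, by simp⟩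
  refine ⟨R, hRP, hR, fun a ha haR => ?_⟩
  by_contra! h
  refine haR (hmax ⟨Set.insert_subset ha hRP, ?_⟩ (Set.subset_insert a R) (Set.mem_insert a R))
  rintro b (rfl | hb) c (rfl | hc)
  exacts [hirr _, (h _ hc).1, (h _ hb).2, hR _ hb _ hc]

theorem exists_iterate_mem_periodicPts (p : α → α) (a : α) : ∃ k, p^[k] a ∈ periodicPts p := by
  obtain ⟨m, l, hne, heq⟩ := Finite.exists_ne_map_eq_of_infinite (p^[·] a)
  wlog hlt : m < l generalizing m l
  · exact this l m hne.symm heq.symm (by omega)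
  refine ⟨m, mk_mem_periodicPts (Nat.sub_pos_of_lt hlt) ?_⟩
  change p^[l - m] (p^[m] a) = p^[m] a
  rw [← iterate_add_apply, Nat.sub_add_cancel hlt.le]
  exact heq.symm

theorem exists_absorbing_independent (p : α → α) (hp : ∀ a, p a ≠ a) :
    ∃ R : Set α, (∀ a ∈ R, p a ∉ R) ∧ ∀ a, ∃ k, p^[k] a ∈ R := by
  obtain ⟨R, hRP, hind, hdom⟩ :=
    exists_maximal_independent (fun a b => p a = b) (periodicPts p) hp
  refine ⟨R, fun a ha hpa => hind a ha _ hpa rfl, fun a => ?_⟩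
  obtain ⟨k, hk⟩ := exists_iterate_mem_periodicPts p a
  suffices ∃ l, p^[l] (p^[k] a) ∈ R from
    let ⟨l, hl⟩ := this
    ⟨l + k, by rwa [iterate_add_apply]⟩
  by_contra! hv
  obtain ⟨b, hb, hvb | hbv⟩ := hdom _ hk (hv 0)
  · exact hv 1 (by rwa [iterate_one, hvb])
  · -- `b` is periodic, so it lies on the forward orbit of its image `p^[k] a`
    obtain ⟨m, hm, hmb⟩ := mem_periodicPts.1 (hRP hb)
    refine hv (m - 1) ?_
    rwa [← hbv, ← iterate_succ_apply, Nat.succ_eq_add_one, Nat.sub_one_add_one hm.ne', hmb.eq]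

theorem exists_alternating (p : α → α) (hp : ∀ a, p a ≠ a) :
    ∃ I : Set α, (∀ a ∉ I, p a ∈ I) ∧ ∀ a ∈ I, p a ∉ I ∨ p (p a) ∉ I := by
  classical
  obtain ⟨R, hR, hreach⟩ := exists_absorbing_independent p hp
  let t a := Nat.find (hreach a)
  have ht0 : ∀ a ∈ R, t a = 0 := fun a ha => (Nat.find_eq_zero _).2 ha
  have hstep : ∀ a ∉ R, t a = t (p a) + 1 := fun a ha => Nat.find_comp_succ _ (hreach (p a)) ha
  refine ⟨{a | t a % 2 = 0}, fun a ha => ?_, fun a ha => ?_⟩ <;>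
    simp only [Set.mem_ofPred_eq] at ha ⊢
  · have haR : a ∉ R := fun h => ha (by rw [ht0 a h])
    have := hstep a haR
    omega
  · by_cases hpa : p a ∈ R
    · have := hstep a fun h => hR a h hpa
      have := ht0 _ hpa
      omega
    · have := hstep _ hpa
      omega

end Combinatorics

/-- for a loop-less digraph `G` (in-neighborhoods `G i`) with minimum in-degree
at least 1, the digraph `G̊` obtained by adding a loop on every vertex admits a boolean
function `f` with interaction digraph `G̊` and `f⁴ = 0`; if moreover `G` is symmetric, one can
get `f³ = 0`. -/
theorem stmt17 (n : ℕ) (G : Fin n → Finset (Fin n))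
    (hloopless : ∀ i, i ∉ G i)
    (hdeg : ∀ i, (G i).Nonempty) :
    (∃ f : (Fin n → Bool) → (Fin n → Bool),
      (∀ j i, dependsB f j i ↔ j ∈ insert i (G i)) ∧
      f^[4] = Function.const _ (fun _ => false)) ∧
    ((∀ i j, j ∈ G i ↔ i ∈ G j) →
      ∃ f : (Fin n → Bool) → (Fin n → Bool),
        (∀ j i, dependsB f j i ↔ j ∈ insert i (G i)) ∧
        f^[3] = Function.const _ (fun _ => false)) := by
  refine ⟨?_, fun hsym => ?_⟩
  · choose p hp using hdeg
    obtain ⟨I, hout, hin⟩ := exists_alternating p fun i h => hloopless i (by simpa [h] using hp i)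
    refine ⟨net G I, dependsB_net_iff hloopless,
      net_iterate_four (fun i hi => ⟨p i, hp i, hout i hi⟩) fun i hi => ?_⟩
    rcases hin i hi with h | h
    exacts [⟨p i, hp i, .inl h⟩, ⟨p i, hp i, .inr ⟨p (p i), hp _, h⟩⟩]
  · obtain ⟨I, -, hind, hdom⟩ :=
      exists_maximal_independent (fun i j => j ∈ G i) Set.univ hloopless
    refine ⟨net G I, dependsB_net_iff hloopless, net_iterate_three (fun i hi => ?_) fun i hi => ?_⟩
    · obtain ⟨j, hj, hij | hji⟩ := hdom i trivial hi
      exacts [⟨j, hij, hj⟩, ⟨j, (hsym _ _).2 hji, hj⟩]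
    · obtain ⟨j, hj⟩ := hdeg i
      exact ⟨j, hj, fun hjI => hind i hi j hjI hj⟩
end
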